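/- (Mirror image lemma.) There exists ε₀* > 0 depending only on v, d, τ, γ such that for all 0 < ε₀ ≤ ε₀* the following holds. Suppose c_I, c_J ∈ Q₀ are distinct points with ‖c_I − c_J‖₁ = s₀ := inf{‖x − y‖₁ : x ≠ y ∈ Q₀} and s₀ ≤ 10|log ε₀|². Then for every c ∈ Q₀ there is exactly one sign σ ∈ {+1, −1} such that the point c̃ = c + σ(c_J − c_I) satisfies ‖2θ* + (c + c̃)·ω‖ ≤ 6δ₀^{1/2}. -/

import Mathlib

open scoped InnerProductSpace

/-- `‖t‖`: the distance from a real number `t` to the nearest integer. -/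
noncomputable def distToInt (t : ℝ) : ℝ := |t - round t|

/-- The ℓ¹ norm `‖x‖₁ = Σᵢ |xᵢ|` on `ℤ^d`. -/
def nrm1 {d : ℕ} (x : Fin d → ℤ) : ℤ := ∑ i, |x i|

/-- The dot product `x·ω` for `x ∈ ℤ^d`, `ω ∈ ℝ^d`. -/
noncomputable def dotw {d : ℕ} (x : Fin d → ℤ) (ω : Fin d → ℝ) : ℝ := ∑ i, (x i : ℝ) * ω i

/-- The ℓ¹ norm on `ℝ^d`. -/
noncomputable def nrm1R {d : ℕ} (x : Fin d → ℝ) : ℝ := ∑ i, |x i|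

/-- The dot product on `ℝ^d`. -/
noncomputable def dotwR {d : ℕ} (x ω : Fin d → ℝ) : ℝ := ∑ i, x i * ω i

/-- The standing hypotheses on the `C²`-cosine like potential `v` with parameter `a`:
`v` is `C²`, even and `1`-periodic, `0` is a nondegenerate maximum, `1/2` is a nondegenerate
minimum, these are the only critical points modulo `1`, `|v''| > 3` near `0` and `1/2`
(within distance `a`), and `|v'| > 3` away from `0` and `1/2`. -/
structure CosLike (v : ℝ → ℝ) (a : ℝ) : Prop where
  smooth : ContDiff ℝ 2 v
  even : ∀ θ, v (-θ) = v θ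
  periodic : ∀ θ, v (θ + 1) = v θ
  a_pos : 0 < a
  a_lt : a < 1 / 10
  critMax : deriv v 0 = 0
  critMax' : deriv (deriv v) 0 < 0
  critMin : deriv v (1 / 2) = 0
  critMin' : 0 < deriv (deriv v) (1 / 2)
  onlyCrit : ∀ θ ∈ Set.Ico (0 : ℝ) 1, deriv v θ = 0 → θ = 0 ∨ θ = 1 / 2
  deriv2_big : ∀ θ, (distToInt θ < a ∨ distToInt (θ - 1 / 2) < a) → 3 < |deriv (deriv v) θ|
  deriv_big : ∀ θ, a ≤ distToInt θ → a ≤ distToInt (θ - 1 / 2) → 3 < |deriv v θ|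

/-- `M₁ = sup_θ max(|v(θ)|, |v'(θ)|, |v''(θ)|)`. -/
noncomputable def M1 (v : ℝ → ℝ) : ℝ :=
  ⨆ θ : ℝ, max |v θ| (max |deriv v θ| |deriv (deriv v) θ|)

/-- The finite-volume Schrödinger operator `H_Λ(θ) = ε Δ + v(θ + x·ω) δ_{x,y}` as a matrix
indexed by a finite set `Λ ⊂ ℤ^d`. -/
noncomputable def Hmat {d : ℕ} (ε : ℝ) (v : ℝ → ℝ) (ω : Fin d → ℝ) (θ : ℝ)
    (Λ : Finset (Fin d → ℤ)) : Matrix Λ Λ ℝ :=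
  Matrix.of fun x y =>
    if nrm1 (x.1 - y.1) = 1 then ε
    else if x = y then v (θ + dotw x.1 ω) else 0

/-- The discrete ℓ¹-ball `{x ∈ ℤ^d : ‖x − c‖₁ ≤ r}` as a `Finset`. -/
noncomputable def ball1 {d : ℕ} (c : Fin d → ℤ) (r : ℝ) : Finset (Fin d → ℤ) :=
  (Finset.Icc (fun i => c i - ⌈r⌉) (fun i => c i + ⌈r⌉)).filter
    fun x => ((nrm1 (x - c) : ℤ) : ℝ) ≤ r

/-- The discrete ℓ¹-ball around a (possibly non-integer) center `c ∈ ℝ^d`. -/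
noncomputable def ballR {d : ℕ} (c : Fin d → ℝ) (r : ℝ) : Finset (Fin d → ℤ) :=
  (Finset.Icc (fun i => ⌊c i - r⌋ - 1) (fun i => ⌈c i + r⌉ + 1)).filter
    fun x => nrm1R (fun i => (x i : ℝ) - c i) ≤ r

/-- The nearest neighbours of `x` in `ℤ^d`. -/
noncomputable def nbrs {d : ℕ} (x : Fin d → ℤ) : Finset (Fin d → ℤ) :=
  (Finset.Icc (fun i => x i - 1) (fun i => x i + 1)).filter fun y => nrm1 (y - x) = 1

/-- `δ₀ = ε₀^{1/20}`. -/
noncomputable def delta0 (ε₀ : ℝ) : ℝ := ε₀ ^ ((1 : ℝ) / 20)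

/-!
On `[0, 1/2]` the hypotheses on `v` force `v' t ≤ -3 min (t, 1/2 - t)`, so `v` decreases there at
a quadratic rate, `v x - v y ≥ 3/4 (y - x)²`. As `v` is even and `1`-periodic, `v θ = v ‖θ‖`, so
`|v θ₁ - v θ₂| < 2t²` forces `‖θ₁ - θ₂‖ ≤ 2t` or `‖θ₁ + θ₂‖ ≤ 2t`. Take `t = δ₀^{1/2} = ε₀^{1/40}`.
Since `s₀ ≲ |log ε₀|²`, the Diophantine condition gives `‖(c_I - c_J)·ω‖ > 12t` for small `ε₀`,
so `θ* + c_I·ω` and `θ* + c_J·ω` are mirror images: `‖2θ* + (c_I + c_J)·ω‖ ≤ 2t`. Comparing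
`θ* + c·ω` with `θ* + c_I·ω` in the same way produces the sign `σ`; both signs together would give
`‖2(c_J - c_I)·ω‖ ≤ 12t`, again excluded by the Diophantine condition.
-/

open Set Filter Topology

theorem distToInt_eq_norm (t : ℝ) : distToInt t = ‖(t : UnitAddCircle)‖ :=
  UnitAddCircle.norm_eq.symm

theorem distToInt_nonneg (t : ℝ) : 0 ≤ distToInt t := abs_nonneg _

theorem distToInt_le_half (t : ℝ) : distToInt t ≤ 1 / 2 := abs_sub_round t

theorem distToInt_le_abs (t : ℝ) : distToInt t ≤ |t| :=
  (round_le t 0).trans_eq (by simp)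

theorem distToInt_eq_abs {t : ℝ} (ht : |t| ≤ 1 / 2) : distToInt t = |t| := by
  rw [distToInt_eq_norm, AddCircle.norm_coe_eq_abs_iff _ one_ne_zero]
  simpa using ht

theorem distToInt_add_intCast (t : ℝ) (n : ℤ) : distToInt (t + n) = distToInt t := by
  simp only [distToInt, round_add_intCast, Int.cast_add, add_sub_add_right_eq_sub]

theorem distToInt_add_le (x y : ℝ) : distToInt (x + y) ≤ distToInt x + distToInt y := by
  simpa only [distToInt_eq_norm, AddCircle.coe_add] using norm_add_le _ _

theorem distToInt_sub_le (x y : ℝ) : distToInt (x - y) ≤ distToInt x + distToInt y := by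
  simpa only [distToInt_eq_norm, AddCircle.coe_sub] using norm_sub_le _ _

theorem Function.Periodic.comp_distToInt {v : ℝ → ℝ} (hper : Function.Periodic v 1)
    (heven : Function.Even v) (t : ℝ) : v (distToInt t) = v t := by
  rw [distToInt]
  rcases abs_choice (t - round t) with h | h <;> rw [h]
  on_goal 2 => rw [heven]
  all_goals simpa using hper.sub_int_mul_eq (x := t) (round t)

theorem min_distToInt_sub_add_le (x y : ℝ) :
    min (distToInt (x - y)) (distToInt (x + y)) ≤ |distToInt x - distToInt y| := by
  set u := x - round x
  set w := y - round y
  have hsub : x - y = u - w + (round x - round y : ℤ) := by push_cast; ring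
  have hadd : x + y = u + w + (round x + round y : ℤ) := by push_cast; ring
  rw [hsub, hadd, distToInt_add_intCast, distToInt_add_intCast,
    show distToInt x = |u| from rfl, show distToInt y = |w| from rfl]
  obtain h | h : |u - w| = |abs u - abs w| ∨ |u + w| = |abs u - abs w| := by
    rcases le_total 0 u with hu | hu <;> rcases le_total 0 w with hw | hw
    all_goals grind [abs_of_nonneg, abs_of_nonpos]
  · exact min_le_of_left_le ((distToInt_le_abs _).trans_eq h)
  · exact min_le_of_right_le ((distToInt_le_abs _).trans_eq h)

theorem lt_neg_of_lt_abs_of_isPreconnected {X : Type*} [TopologicalSpace X] {f : X → ℝ}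
    {s : Set X} {c : ℝ} (hc : 0 ≤ c) (hs : IsPreconnected s) (hf : ContinuousOn f s)
    (hbig : ∀ x ∈ s, c < |f x|) {x₀ x : X} (hx₀ : x₀ ∈ s) (hneg : f x₀ < 0)
    (hx : x ∈ s) : f x < -c := by
  rcases lt_abs.mp (hbig x hx) with hpos | hlt
  · obtain ⟨z, hz, hz0⟩ := hs.intermediate_value hx₀ hx hf ⟨hneg.le, by linarith⟩
    have := hbig z hz
    rw [hz0, abs_zero] at this
    linarith
  · linarith

theorem sub_le_sub_of_deriv_le_deriv {f g : ℝ → ℝ} (hf : Differentiable ℝ f)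
    (hg : Differentiable ℝ g) {x y : ℝ} (hxy : x ≤ y)
    (hfg : ∀ t ∈ Ioo x y, deriv f t ≤ deriv g t) : f y - f x ≤ g y - g x := by
  have hmono : MonotoneOn (g - f) (Icc x y) := by
    refine monotoneOn_of_deriv_nonneg (convex_Icc x y) (hg.sub hf).continuous.continuousOn
      (hg.sub hf).differentiableOn fun t ht => ?_
    rw [interior_Icc] at ht
    rw [deriv_sub (hg t) (hf t)]
    linarith [hfg t ht]
  have := hmono ⟨le_rfl, hxy⟩ ⟨hxy, le_rfl⟩ hxy
  simp only [Pi.sub_apply] at this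
  linarith

theorem hasDerivAt_half_mul_sub_sq (c x t : ℝ) :
    HasDerivAt (fun s => c / 2 * (s - x) ^ 2) (c * (t - x)) t :=
  ((((hasDerivAt_id' t).sub_const x).fun_pow 2).const_mul (c / 2)).congr_deriv (by norm_num; ring)

theorem sq_le_sub_of_deriv_le_neg_mul_min {f : ℝ → ℝ} (hf : Differentiable ℝ f)
    {c x y : ℝ} (hxy : x ≤ y) (hf' : ∀ t ∈ Ioo x y, deriv f t ≤ -c * min (t - x) (y - t)) :
    c / 4 * (y - x) ^ 2 ≤ f x - f y := by
  set m := (x + y) / 2 with hm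
  have hleft := sub_le_sub_of_deriv_le_deriv hf
    (fun t => (hasDerivAt_half_mul_sub_sq (-c) x t).differentiableAt) (show x ≤ m by linarith)
    fun t ht => by
      have := hf' t ⟨ht.1, by linarith [ht.2]⟩
      rw [min_eq_left (by linarith [ht.2])] at this
      rwa [(hasDerivAt_half_mul_sub_sq _ _ t).deriv]
  have hright := sub_le_sub_of_deriv_le_deriv hf
    (fun t => (hasDerivAt_half_mul_sub_sq c y t).differentiableAt) (show m ≤ y by linarith)
    fun t ht => by
      have := hf' t ⟨by linarith [ht.1], ht.2⟩
      rw [min_eq_right (by linarith [ht.1])] at this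
      rw [(hasDerivAt_half_mul_sub_sq _ _ t).deriv]
      linarith
  have hmx : m - x = (y - x) / 2 := by ring
  have hmy : m - y = -((y - x) / 2) := by ring
  simp only [hmx, hmy, sub_self] at hleft hright
  linarith

namespace CosLike

variable {v : ℝ → ℝ} {a : ℝ}

theorem differentiable (hv : CosLike v a) : Differentiable ℝ v :=
  hv.smooth.differentiable (by norm_num)

theorem contDiff_deriv (hv : CosLike v a) : ContDiff ℝ 1 (deriv v) :=
  (contDiff_succ_iff_deriv.mp (show ContDiff ℝ (1 + 1) v from hv.smooth)).2.2

theorem differentiable_deriv (hv : CosLike v a) : Differentiable ℝ (deriv v) :=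
  hv.contDiff_deriv.differentiable one_ne_zero

theorem continuous_deriv_deriv (hv : CosLike v a) : Continuous (deriv (deriv v)) :=
  hv.contDiff_deriv.continuous_deriv le_rfl

theorem deriv_deriv_lt_neg_three (hv : CosLike v a) {t : ℝ} (h0 : 0 ≤ t) (ht : t < a) :
    deriv (deriv v) t < -3 :=
  lt_neg_of_lt_abs_of_isPreconnected (by norm_num) isPreconnected_Ico
    hv.continuous_deriv_deriv.continuousOn
    (fun x hx => hv.deriv2_big x <| .inl <| (distToInt_le_abs x).trans_lt <| by
      rw [abs_of_nonneg hx.1]; exact hx.2)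
    (left_mem_Ico.mpr hv.a_pos) hv.critMax' ⟨h0, ht⟩

theorem three_lt_deriv_deriv (hv : CosLike v a) {t : ℝ} (ht : 1 / 2 - a < t)
    (h1 : t ≤ 1 / 2) : 3 < deriv (deriv v) t := by
  have := lt_neg_of_lt_abs_of_isPreconnected (f := fun x => -deriv (deriv v) x) (c := 3)
    (by norm_num) isPreconnected_Ioc hv.continuous_deriv_deriv.neg.continuousOn
    (fun x hx => by
      rw [abs_neg]
      refine hv.deriv2_big x <| .inr <| (distToInt_le_abs _).trans_lt ?_
      rw [abs_of_nonpos (by linarith [hx.2])]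
      linarith [hx.1])
    (right_mem_Ioc.mpr (by linarith [hv.a_pos])) (neg_neg_of_pos hv.critMin') ⟨ht, h1⟩
  linarith

theorem deriv_le_neg_three_mul (hv : CosLike v a) {t : ℝ} (h0 : 0 ≤ t) (ht : t ≤ a) :
    deriv v t ≤ -3 * t := by
  have := (convex_Icc 0 a).image_sub_le_mul_sub_of_deriv_le
    hv.differentiable_deriv.continuous.continuousOn hv.differentiable_deriv.differentiableOn
    (fun x hx => by
      rw [interior_Icc] at hx
      exact (hv.deriv_deriv_lt_neg_three hx.1.le hx.2).le)
    0 ⟨le_rfl, hv.a_pos.le⟩ t ⟨h0, ht⟩ h0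
  rwa [hv.critMax, sub_zero, sub_zero] at this

theorem deriv_le_neg_three_mul_half_sub (hv : CosLike v a) {t : ℝ} (ht : 1 / 2 - a ≤ t)
    (h1 : t ≤ 1 / 2) : deriv v t ≤ -3 * (1 / 2 - t) := by
  have := (convex_Icc (1 / 2 - a) (1 / 2)).mul_sub_le_image_sub_of_le_deriv
    hv.differentiable_deriv.continuous.continuousOn hv.differentiable_deriv.differentiableOn
    (fun x hx => by
      rw [interior_Icc] at hx
      exact (hv.three_lt_deriv_deriv hx.1 hx.2.le).le)
    t ⟨ht, h1⟩ (1 / 2) ⟨by linarith [hv.a_pos], le_rfl⟩ h1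
  rw [hv.critMin] at this
  linarith

theorem deriv_lt_neg_three (hv : CosLike v a) {t : ℝ} (ht : a ≤ t) (h1 : t ≤ 1 / 2 - a) :
    deriv v t < -3 := by
  have ha := hv.a_pos
  have hmid : ∀ x ∈ Icc a (1 / 2 - a), 3 < |deriv v x| := fun x hx => by
    have hx0 : distToInt x = x := by
      rw [distToInt_eq_abs] <;> rw [abs_of_nonneg] <;> linarith [hx.1, hx.2]
    have hx1 : distToInt (x - 1 / 2) = 1 / 2 - x := by
      rw [distToInt_eq_abs] <;> rw [abs_of_nonpos] <;> linarith [hx.1, hx.2]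
    exact hv.deriv_big x (by rw [hx0]; exact hx.1) (by rw [hx1]; linarith [hx.2])
  exact lt_neg_of_lt_abs_of_isPreconnected (by norm_num) isPreconnected_Icc
    hv.differentiable_deriv.continuous.continuousOn hmid ⟨le_rfl, by linarith⟩
    ((hv.deriv_le_neg_three_mul ha.le le_rfl).trans_lt (by linarith)) ⟨ht, h1⟩

theorem deriv_le_neg_three_mul_min (hv : CosLike v a) {t : ℝ} (h0 : 0 ≤ t)
    (h1 : t ≤ 1 / 2) : deriv v t ≤ -3 * min t (1 / 2 - t) := by
  have := hv.a_lt
  have hl := min_le_left t (1 / 2 - t)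
  have hr := min_le_right t (1 / 2 - t)
  rcases le_total t a with hta | hta
  · linarith [hv.deriv_le_neg_three_mul h0 hta]
  rcases le_total (1 / 2 - a) t with hta' | hta'
  · linarith [hv.deriv_le_neg_three_mul_half_sub hta' h1]
  · linarith [hv.deriv_lt_neg_three hta hta']

theorem sq_sub_le_sub (hv : CosLike v a) {x y : ℝ} (hx : 0 ≤ x) (hxy : x ≤ y)
    (hy : y ≤ 1 / 2) : 3 / 4 * (y - x) ^ 2 ≤ v x - v y :=
  sq_le_sub_of_deriv_le_neg_mul_min hv.differentiable hxy fun t ht =>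
    (hv.deriv_le_neg_three_mul_min (by linarith [ht.1]) (by linarith [ht.2])).trans
      (mul_le_mul_of_nonpos_left (min_le_min (by linarith [ht.1]) (by linarith [ht.2]))
        (by norm_num))

theorem sq_min_distToInt_le (hv : CosLike v a) (θ₁ θ₂ : ℝ) :
    3 / 4 * min (distToInt (θ₁ - θ₂)) (distToInt (θ₁ + θ₂)) ^ 2 ≤ |v θ₁ - v θ₂| := by
  have hv₁ := Function.Periodic.comp_distToInt hv.periodic hv.even θ₁
  have hv₂ := Function.Periodic.comp_distToInt hv.periodic hv.even θ₂
  have hsq : 3 / 4 * (distToInt θ₁ - distToInt θ₂) ^ 2 ≤ |v θ₁ - v θ₂| := by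
    rcases le_total (distToInt θ₁) (distToInt θ₂) with h | h
    · have := hv.sq_sub_le_sub (distToInt_nonneg θ₁) h (distToInt_le_half θ₂)
      rw [hv₁, hv₂] at this
      rw [← neg_sub, neg_sq]
      exact this.trans (le_abs_self _)
    · have := hv.sq_sub_le_sub (distToInt_nonneg θ₂) h (distToInt_le_half θ₁)
      rw [hv₁, hv₂] at this
      rw [abs_sub_comm]
      exact this.trans (le_abs_self _)
  have hmin_nonneg := le_min (distToInt_nonneg (θ₁ - θ₂)) (distToInt_nonneg (θ₁ + θ₂))
  calc 3 / 4 * min (distToInt (θ₁ - θ₂)) (distToInt (θ₁ + θ₂)) ^ 2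
      ≤ 3 / 4 * |distToInt θ₁ - distToInt θ₂| ^ 2 := by
        gcongr
        exact min_distToInt_sub_add_le θ₁ θ₂
    _ = 3 / 4 * (distToInt θ₁ - distToInt θ₂) ^ 2 := by rw [sq_abs]
    _ ≤ |v θ₁ - v θ₂| := hsq

theorem distToInt_sub_le_or_distToInt_add_le (hv : CosLike v a) {θ₁ θ₂ t : ℝ} (ht : 0 ≤ t)
    (h : |v θ₁ - v θ₂| < 2 * t ^ 2) :
    distToInt (θ₁ - θ₂) ≤ 2 * t ∨ distToInt (θ₁ + θ₂) ≤ 2 * t := by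
  rw [← min_le_iff]
  have := hv.sq_min_distToInt_le θ₁ θ₂
  exact (le_abs_self _).trans (abs_le_of_sq_le_sq (by nlinarith) (by positivity))

end CosLike

theorem existsUnique_sign_distToInt_le {A B C t : ℝ} (hAB : distToInt (A + B) ≤ 2 * t)
    (hCA : distToInt (C - A) ≤ 2 * t ∨ distToInt (C + A) ≤ 2 * t)
    (hBA : 12 * t < distToInt (2 * (B - A))) :
    ∃! s : ℤ, (s = 1 ∨ s = -1) ∧ distToInt (2 * C + s * (B - A)) ≤ 6 * t := by
  have hnot :
      ¬ (distToInt (2 * C + (B - A)) ≤ 6 * t ∧ distToInt (2 * C - (B - A)) ≤ 6 * t) := by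
    rintro ⟨hplus, hminus⟩
    have := distToInt_sub_le (2 * C + (B - A)) (2 * C - (B - A))
    rw [show 2 * C + (B - A) - (2 * C - (B - A)) = 2 * (B - A) by ring] at this
    linarith
  rcases hCA with h | h
  · have hplus : distToInt (2 * C + (B - A)) ≤ 6 * t := calc
      _ = distToInt (A + B + (C - A) + (C - A)) := by ring_nf
      _ ≤ distToInt (A + B) + distToInt (C - A) + distToInt (C - A) :=
        (distToInt_add_le _ _).trans (add_le_add_left (distToInt_add_le _ _) _)
      _ ≤ 6 * t := by linarith
    refine ⟨1, ⟨.inl rfl, by rwa [Int.cast_one, one_mul]⟩, ?_⟩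
    rintro s ⟨rfl | rfl, hs⟩
    · rfl
    · rw [Int.cast_neg, Int.cast_one, neg_one_mul, ← sub_eq_add_neg] at hs
      exact absurd ⟨hplus, hs⟩ hnot
  · have hminus : distToInt (2 * C - (B - A)) ≤ 6 * t := calc
      _ = distToInt (C + A + (C + A) - (A + B)) := by ring_nf
      _ ≤ distToInt (C + A) + distToInt (C + A) + distToInt (A + B) :=
        (distToInt_sub_le _ _).trans (add_le_add_left (distToInt_add_le _ _) _)
      _ ≤ 6 * t := by linarith
    refine ⟨-1, ⟨.inr rfl, ?_⟩, ?_⟩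
    · rwa [Int.cast_neg, Int.cast_one, neg_one_mul, ← sub_eq_add_neg]
    rintro s ⟨rfl | rfl, hs⟩
    · rw [Int.cast_one, one_mul] at hs
      exact absurd ⟨hs, hminus⟩ hnot
    · rfl

section Lattice

variable {d : ℕ}

theorem dotw_add (x y : Fin d → ℤ) (ω : Fin d → ℝ) :
    dotw (x + y) ω = dotw x ω + dotw y ω := by
  simp only [dotw, Pi.add_apply, Int.cast_add, add_mul, Finset.sum_add_distrib]

theorem dotw_sub (x y : Fin d → ℤ) (ω : Fin d → ℝ) :
    dotw (x - y) ω = dotw x ω - dotw y ω := by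
  simp only [dotw, Pi.sub_apply, Int.cast_sub, sub_mul, Finset.sum_sub_distrib]

theorem dotw_smul (n : ℤ) (x : Fin d → ℤ) (ω : Fin d → ℝ) :
    dotw (n • x) ω = n * dotw x ω := by
  simp only [dotw, Pi.smul_apply, smul_eq_mul, Int.cast_mul, Finset.mul_sum, mul_assoc]

theorem one_le_nrm1 {x : Fin d → ℤ} (hx : x ≠ 0) : 1 ≤ nrm1 x := by
  obtain ⟨i, hi⟩ := Function.ne_iff.mp hx
  exact (Int.one_le_abs hi).trans
    (Finset.single_le_sum (fun j _ => abs_nonneg (x j)) (Finset.mem_univ i))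

theorem nrm1_smul (n : ℤ) (x : Fin d → ℤ) : nrm1 (n • x) = |n| * nrm1 x := by
  simp only [nrm1, Pi.smul_apply, smul_eq_mul, abs_mul, Finset.mul_sum]

theorem nrm1_sub_comm (x y : Fin d → ℤ) : nrm1 (x - y) = nrm1 (y - x) := by
  simp only [nrm1, Pi.sub_apply, abs_sub_comm]

theorem lt_distToInt_dotw_of_nrm1_le {ω : Fin d → ℝ} {τ γ : ℝ} (hτ : 0 ≤ τ)
    (hDC : ∀ x : Fin d → ℤ, x ≠ 0 → γ / (nrm1 x : ℝ) ^ τ ≤ distToInt (dotw x ω))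
    {r K : ℝ} (hr : 0 ≤ r) (hK : r * K ^ τ < γ) {x : Fin d → ℤ} (hx : x ≠ 0)
    (hxK : (nrm1 x : ℝ) ≤ K) : r < distToInt (dotw x ω) := by
  have hx1 : (1 : ℝ) ≤ nrm1 x := by exact_mod_cast one_le_nrm1 hx
  refine lt_of_lt_of_le ?_ (hDC x hx)
  rw [lt_div_iff₀ (Real.rpow_pos_of_pos (by linarith) τ)]
  calc r * (nrm1 x : ℝ) ^ τ ≤ r * K ^ τ := by gcongr
    _ < γ := hK

end Lattice

theorem eventually_twelve_mul_sqrt_delta0_mul_rpow_lt (τ : ℝ) {γ : ℝ} (hγ : 0 < γ) :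
    ∀ᶠ ε in 𝓝[>] 0, 12 * √(delta0 ε) * (20 * Real.log ε ^ 2) ^ τ < γ := by
  have hlim :
      Tendsto (fun ε => 12 * √(delta0 ε) * (20 * Real.log ε ^ 2) ^ τ) (𝓝[>] 0) (𝓝 0) := by
    -- with `y = -log ε`, the function is `12 · 20^τ · y^{2τ} e^{-y/40}`
    have h := ((tendsto_rpow_mul_exp_neg_mul_atTop_nhds_zero (2 * τ) (1 / 40)
      (by norm_num)).const_mul (12 * 20 ^ τ)).comp
      (tendsto_neg_atBot_atTop.comp Real.tendsto_log_nhdsGT_zero)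
    rw [mul_zero] at h
    refine h.congr' ?_
    filter_upwards [Ioo_mem_nhdsGT one_pos] with ε ⟨hε0, hε1⟩
    have hlog : 0 ≤ -Real.log ε := by linarith [Real.log_neg hε0 hε1]
    simp only [Function.comp_apply, delta0]
    rw [Real.sqrt_eq_rpow, ← Real.rpow_mul hε0.le, Real.mul_rpow (by norm_num) (sq_nonneg _),
      ← neg_sq, ← Real.rpow_natCast, ← Real.rpow_mul hlog, Real.rpow_def_of_pos hε0]
    ring_nf
  exact hlim.eventually_lt_const hγ

/-- Mirror image lemma: if `c_I, c_J ∈ Q₀` are distinct points realizing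
`s₀ = inf{‖x − y‖₁ : x ≠ y ∈ Q₀}` and `s₀ ≤ 10|log ε₀|²`, then every `c ∈ Q₀` has exactly one
sign `s ∈ {+1, −1}` such that `c̃ = c + s(c_J − c_I)` satisfies
`‖2θ* + (c + c̃)·ω‖ ≤ 6δ₀^{1/2}`. -/
theorem statement6 (v : ℝ → ℝ) (a : ℝ) (hv : CosLike v a) (d : ℕ) (τ γ : ℝ)
    (hτ : (d : ℝ) < τ) (hγ : 0 < γ) :
    ∃ ε₀star > (0 : ℝ), ∀ ε₀ : ℝ, 0 < ε₀ → ε₀ ≤ ε₀star →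
      ∀ ω : Fin d → ℝ, (∀ i, ω i ∈ Set.Icc (0 : ℝ) 1) →
      (∀ x : Fin d → ℤ, x ≠ 0 → γ / (nrm1 x : ℝ) ^ τ ≤ distToInt (dotw x ω)) →
      ∀ θs Es : ℝ, ∀ cI cJ : Fin d → ℤ, cI ≠ cJ →
        |v (θs + dotw cI ω) - Es| < delta0 ε₀ →
        |v (θs + dotw cJ ω) - Es| < delta0 ε₀ →
        -- `‖c_I − c_J‖₁` realizes the infimum `s₀`
        (∀ x y : Fin d → ℤ, x ≠ y → |v (θs + dotw x ω) - Es| < delta0 ε₀ →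
          |v (θs + dotw y ω) - Es| < delta0 ε₀ → nrm1 (cI - cJ) ≤ nrm1 (x - y)) →
        -- `s₀ ≤ 10|log ε₀|²`
        (nrm1 (cI - cJ) : ℝ) ≤ 10 * |Real.log ε₀| ^ 2 →
      ∀ c : Fin d → ℤ, |v (θs + dotw c ω) - Es| < delta0 ε₀ →
        ∃! s : ℤ, (s = 1 ∨ s = -1) ∧
          distToInt (2 * θs + dotw (c + (c + s • (cJ - cI))) ω)
            ≤ 6 * delta0 ε₀ ^ ((1 : ℝ) / 2) := by
  obtain ⟨E, hE0, hE⟩ := mem_nhdsGT_iff_exists_Ioc_subset.mp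
    (eventually_twelve_mul_sqrt_delta0_mul_rpow_lt τ hγ)
  refine ⟨E, hE0, fun ε₀ hε₀ hε₀E ω _ hDC θs Es cI cJ hne hvI hvJ _ hs₀ c hvc => ?_⟩
  set t := √(delta0 ε₀)
  have ht : 0 ≤ t := Real.sqrt_nonneg _
  have htsq : t ^ 2 = delta0 ε₀ := Real.sq_sqrt (Real.rpow_nonneg hε₀.le _)
  have hclose : ∀ x y : Fin d → ℤ, |v (θs + dotw x ω) - Es| < delta0 ε₀ →
      |v (θs + dotw y ω) - Es| < delta0 ε₀ →
      |v (θs + dotw x ω) - v (θs + dotw y ω)| < 2 * t ^ 2 := fun x y hx hy => by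
    rw [htsq]
    exact (abs_sub_le _ Es _).trans_lt (by rw [abs_sub_comm Es]; linarith)
  have hsep : ∀ x : Fin d → ℤ, x ≠ 0 → (nrm1 x : ℝ) ≤ 20 * Real.log ε₀ ^ 2 →
      12 * t < distToInt (dotw x ω) := fun x hx hxK =>
    lt_distToInt_dotw_of_nrm1_le ((Nat.cast_nonneg d).trans hτ.le) hDC (by positivity)
      (hE ⟨hε₀, hε₀E⟩) hx hxK
  rw [sq_abs] at hs₀
  have hAB : distToInt ((θs + dotw cI ω) + (θs + dotw cJ ω)) ≤ 2 * t := by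
    refine (hv.distToInt_sub_le_or_distToInt_add_le ht (hclose cI cJ hvI hvJ)).resolve_left
      fun h => ?_
    rw [add_sub_add_left_eq_sub, ← dotw_sub] at h
    linarith [hsep (cI - cJ) (sub_ne_zero.mpr hne) (by linarith [sq_nonneg (Real.log ε₀)])]
  have hBA : 12 * t < distToInt (2 * ((θs + dotw cJ ω) - (θs + dotw cI ω))) := by
    have := hsep ((2 : ℤ) • (cJ - cI)) (smul_ne_zero two_ne_zero (sub_ne_zero.mpr hne.symm))
      (by rw [nrm1_smul, abs_two, nrm1_sub_comm]; push_cast; linarith)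
    rw [add_sub_add_left_eq_sub]
    rwa [dotw_smul, dotw_sub, Int.cast_two] at this
  have hmain := existsUnique_sign_distToInt_le hAB
    (hv.distToInt_sub_le_or_distToInt_add_le ht (hclose c cI hvc hvI)) hBA
  have hexpr : ∀ s : ℤ, 2 * θs + dotw (c + (c + s • (cJ - cI))) ω =
      2 * (θs + dotw c ω) + s * ((θs + dotw cJ ω) - (θs + dotw cI ω)) := fun s => by
    rw [dotw_add, dotw_add, dotw_smul, dotw_sub]
    ring
  simpa only [hexpr, ← Real.sqrt_eq_rpow] using hmain
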